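/- arXiv:2603.27709 — 5 statements merged into one kernel-verified Lean document; each statement's English description precedes it below -/
import Mathlib

section
/- (Main Lemma) Let 𝒢 be a torsion class in mod-Λ and let 0 → A → B →p C → 0 be a short exact sequence of objects in 𝒢. Let B′ be a strict subobject of B, set A′ = A ∩ B′ and C′ = p(B′). Then A′ is a strict subobject of A and C′ is a strict subobject of C. -/
/-!
Common framework: a torsion class `𝒢` in `mod-Λ` is modelled as a predicate
`G : ModuleCat R → Prop` (closed under isomorphism, quotients and extensions).
Strict subobjects, fibrations, cofibrations, strict morphisms, pseudo-torsion
classes etc. follow the definitions of the paper.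
-/

namespace PaperTC

variable {R : Type} [Ring R]

/-- Membership of a (type-level) module in a class of modules. -/
def Mem (G : ModuleCat.{0} R → Prop) (M : Type) [AddCommGroup M] [Module R M] : Prop :=
  G (ModuleCat.of R M)

/-- `A` is a strict subobject of `M` (w.r.t. the torsion class `G`):
`A` lies in `G` and `A ⊓ B'` lies in `G` for every subobject `B'` of `M`. -/
def IsStrictSub (G : ModuleCat.{0} R → Prop) {M : Type} [AddCommGroup M] [Module R M]
    (A : Submodule R M) : Prop :=
  Mem G ↥A ∧ ∀ B' : Submodule R M, Mem G ↥B' → Mem G ↥(A ⊓ B')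

/-- A fibration is a surjection whose kernel is a strict subobject of the source. -/
def IsFibration (G : ModuleCat.{0} R → Prop) {M N : Type} [AddCommGroup M] [Module R M]
    [AddCommGroup N] [Module R N] (f : M →ₗ[R] N) : Prop :=
  Function.Surjective f ∧ IsStrictSub G (LinearMap.ker f)

/-- A strict morphism: kernel is a strict subobject of the source and image a
strict subobject of the target. -/
def IsStrictMorphism (G : ModuleCat.{0} R → Prop) {M N : Type} [AddCommGroup M] [Module R M]
    [AddCommGroup N] [Module R N] (f : M →ₗ[R] N) : Prop :=
  IsStrictSub G (LinearMap.ker f) ∧ IsStrictSub G (LinearMap.range f)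

/-- `G` is a torsion class in `mod-Λ`. -/
structure IsTorsionClass (G : ModuleCat.{0} R → Prop) : Prop where
  iso_closed : ∀ (M N : Type) [AddCommGroup M] [Module R M] [AddCommGroup N] [Module R N],
      (M ≃ₗ[R] N) → Mem G M → Mem G N
  zero_mem : ∀ (M : Type) [AddCommGroup M] [Module R M], Subsingleton M → Mem G M
  quot_closed : ∀ (M : Type) [AddCommGroup M] [Module R M] (N : Submodule R M),
      Mem G M → Mem G (M ⧸ N)
  ext_closed : ∀ (A B C : Type) [AddCommGroup A] [Module R A] [AddCommGroup B] [Module R B]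
      [AddCommGroup C] [Module R C] (f : A →ₗ[R] B) (g : B →ₗ[R] C),
      Function.Injective f → Function.Surjective g →
      LinearMap.range f = LinearMap.ker g → Mem G A → Mem G C → Mem G B

/-- A pseudo-torsion class `P` in the torsion class `G`: nonempty (contains zero
objects), closed under strict quotients and under strict extensions. -/
structure IsPseudoTorsionClass (G P : ModuleCat.{0} R → Prop) : Prop where
  subset : ∀ M : ModuleCat.{0} R, P M → G M
  zero_mem : ∀ (M : Type) [AddCommGroup M] [Module R M], Subsingleton M → Mem G M → Mem P M
  quot_closed : ∀ (M : Type) [AddCommGroup M] [Module R M] (A : Submodule R M),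
      IsStrictSub G A → Mem P M → Mem P (M ⧸ A)
  ext_closed : ∀ (A B C : Type) [AddCommGroup A] [Module R A] [AddCommGroup B] [Module R B]
      [AddCommGroup C] [Module R C] (f : A →ₗ[R] B) (g : B →ₗ[R] C),
      Function.Injective f → Function.Surjective g →
      LinearMap.range f = LinearMap.ker g → IsStrictSub G (LinearMap.range f) →
      Mem P A → Mem P C → Mem P B

/-- A pseudo-torsionfree class `Q` in the torsion class `G`. -/
structure IsPseudoTorsionFreeClass (G Q : ModuleCat.{0} R → Prop) : Prop where
  subset : ∀ M : ModuleCat.{0} R, Q M → G M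
  zero_mem : ∀ (M : Type) [AddCommGroup M] [Module R M], Subsingleton M → Mem G M → Mem Q M
  sub_closed : ∀ (M : Type) [AddCommGroup M] [Module R M] (A : Submodule R M),
      IsStrictSub G A → Mem Q M → Mem Q ↥A
  ext_closed : ∀ (A B C : Type) [AddCommGroup A] [Module R A] [AddCommGroup B] [Module R B]
      [AddCommGroup C] [Module R C] (f : A →ₗ[R] B) (g : B →ₗ[R] C),
      Function.Injective f → Function.Surjective g →
      LinearMap.range f = LinearMap.ker g → IsStrictSub G (LinearMap.range f) →
      Mem Q A → Mem Q C → Mem Q B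

/-- `Y` lies in the right perpendicular class `X ⟂`: no nonzero strict morphism
from an object of `X` to `Y`. -/
def MemRightPerp (G X : ModuleCat.{0} R → Prop) (Y : Type) [AddCommGroup Y] [Module R Y] : Prop :=
  Mem G Y ∧ ∀ M : ModuleCat.{0} R, X M → ∀ f : M →ₗ[R] Y, IsStrictMorphism G f → f = 0

/-- `M` lies in the left perpendicular class `⟂ Y`. -/
def MemLeftPerp (G Y : ModuleCat.{0} R → Prop) (M : Type) [AddCommGroup M] [Module R M] : Prop :=
  Mem G M ∧ ∀ N : ModuleCat.{0} R, Y N → ∀ f : M →ₗ[R] N, IsStrictMorphism G f → f = 0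

/-- A pseudo-wide subcategory `W` of `G`. -/
structure IsPseudoWide (G W : ModuleCat.{0} R → Prop) : Prop where
  subset : ∀ M : ModuleCat.{0} R, W M → G M
  zero_mem : ∀ (M : Type) [AddCommGroup M] [Module R M], Subsingleton M → Mem G M → Mem W M
  kic : ∀ (A B : Type) [AddCommGroup A] [Module R A] [AddCommGroup B] [Module R B],
      Mem W A → Mem W B → ∀ f : A →ₗ[R] B, IsStrictMorphism G f →
      Mem W ↥(LinearMap.ker f) ∧ Mem W ↥(LinearMap.range f) ∧
        Mem W (B ⧸ LinearMap.range f)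
  ext_closed : ∀ (A B C : Type) [AddCommGroup A] [Module R A] [AddCommGroup B] [Module R B]
      [AddCommGroup C] [Module R C] (f : A →ₗ[R] B) (g : B →ₗ[R] C),
      Function.Injective f → Function.Surjective g →
      LinearMap.range f = LinearMap.ker g → IsStrictSub G (LinearMap.range f) →
      Mem W A → Mem W C → Mem W B

/-- A stability condition: a real-valued function on modules, invariant under
isomorphism and additive on short exact sequences of finitely generated modules
(this is exactly a functional on `K₀Λ` applied to dimension vectors). -/
structure StabilityCondition (R : Type) [Ring R] : Type 1 where
  val : ModuleCat.{0} R → ℝ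
  iso_inv : ∀ (M N : ModuleCat.{0} R), (↥M ≃ₗ[R] ↥N) → val M = val N
  additive : ∀ (M : ModuleCat.{0} R), Module.Finite R ↥M → ∀ A : Submodule R ↥M,
      val (ModuleCat.of R ↥A) + val (ModuleCat.of R (↥M ⧸ A)) = val M

/-- The value `θ(M)` of a stability condition on a module. -/
def StabilityCondition.app (θ : StabilityCondition R) (M : Type) [AddCommGroup M]
    [Module R M] : ℝ :=
  θ.val (ModuleCat.of R M)

/-- `𝒫(θ)`: objects which are zero, or on which `θ` is positive together with
all nonzero strict quotients. -/
def memP (G : ModuleCat.{0} R → Prop) (θ : StabilityCondition R)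
    (M : Type) [AddCommGroup M] [Module R M] : Prop :=
  Mem G M ∧ (Subsingleton M ∨ (0 < θ.app M ∧
    ∀ A : Submodule R M, IsStrictSub G A → A ≠ ⊤ → 0 < θ.app (M ⧸ A)))

/-- `𝒫̄(θ)`: `θ` is nonnegative on the object and all its strict quotients. -/
def memPbar (G : ModuleCat.{0} R → Prop) (θ : StabilityCondition R)
    (M : Type) [AddCommGroup M] [Module R M] : Prop :=
  Mem G M ∧ 0 ≤ θ.app M ∧ ∀ A : Submodule R M, IsStrictSub G A → 0 ≤ θ.app (M ⧸ A)

/-- `𝒬(θ)`: objects which are zero, or on which `θ` is negative together with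
all nonzero strict subobjects. -/
def memQ (G : ModuleCat.{0} R → Prop) (θ : StabilityCondition R)
    (M : Type) [AddCommGroup M] [Module R M] : Prop :=
  Mem G M ∧ (Subsingleton M ∨ (θ.app M < 0 ∧
    ∀ A : Submodule R M, IsStrictSub G A → A ≠ ⊥ → θ.app ↥A < 0))

/-- `𝒬̄(θ)`: `θ` is nonpositive on the object and all its strict subobjects. -/
def memQbar (G : ModuleCat.{0} R → Prop) (θ : StabilityCondition R)
    (M : Type) [AddCommGroup M] [Module R M] : Prop :=
  Mem G M ∧ θ.app M ≤ 0 ∧ ∀ A : Submodule R M, IsStrictSub G A → θ.app ↥A ≤ 0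

/-- `𝒲(θ)`: θ-semistable objects of `G`; equivalently `θ ∈ D_𝒢(M)`. -/
def memW (G : ModuleCat.{0} R → Prop) (θ : StabilityCondition R)
    (M : Type) [AddCommGroup M] [Module R M] : Prop :=
  Mem G M ∧ θ.app M = 0 ∧ ∀ A : Submodule R M, IsStrictSub G A → θ.app ↥A ≤ 0

/-- `𝒲₀(θ)`: objects of `𝒲(θ)` with no proper nonzero strict subobject in `𝒲(θ)`. -/
def memW0 (G : ModuleCat.{0} R → Prop) (θ : StabilityCondition R)
    (M : Type) [AddCommGroup M] [Module R M] : Prop :=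
  memW G θ M ∧ ∀ A : Submodule R M, IsStrictSub G A → memW G θ ↥A → A = ⊥ ∨ A = ⊤

/-- The linear path `θ_t = t·θ₁ + (1-t)·θ₀` in the stability space. -/
def lineSeg (θ₀ θ₁ : StabilityCondition R) (t : ℝ) : StabilityCondition R where
  val M := t * θ₁.val M + (1 - t) * θ₀.val M
  iso_inv M N e := by (try simp only []); rw [θ₁.iso_inv M N e, θ₀.iso_inv M N e]
  additive M hM A := by
    have h1 := θ₁.additive M hM A
    have h0 := θ₀.additive M hM A
    try simp only []
    linear_combination t * h1 + (1 - t) * h0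

/-- A smooth green path in the stability space. -/
structure IsGreenPath (G : ModuleCat.{0} R → Prop) (θ : ℝ → StabilityCondition R) : Prop where
  smooth : ∀ M : ModuleCat.{0} R, ContDiff ℝ (⊤ : ℕ∞) fun t => (θ t).val M
  green : ∀ (t : ℝ) (M : ModuleCat.{0} R), ¬Subsingleton ↥M → memW G (θ t) ↥M →
      0 < deriv (fun s => (θ s).val M) t
  eventually_pos : ∃ T : ℝ, ∀ t : ℝ, T < t → ∀ M : ModuleCat.{0} R, G M →
      ¬Subsingleton ↥M → 0 < (θ t).val M
  eventually_neg : ∃ T : ℝ, ∀ t : ℝ, t < T → ∀ M : ModuleCat.{0} R, G M →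
      ¬Subsingleton ↥M → (θ t).val M < 0

/-- A filtration `M = c 0 ⊃ c 1 ⊃ ⋯ ⊃ c m = 0` by strict subobjects whose
subquotients `c k / c (k+1)` lie in the slices `W (t k)` with `t` strictly
decreasing. -/
def IsSliceFiltration (G : ModuleCat.{0} R → Prop) {S : Type} [Preorder S]
    (W : S → ModuleCat.{0} R → Prop) {M : Type} [AddCommGroup M] [Module R M]
    (m : ℕ) (t : Fin m → S) (c : Fin (m + 1) → Submodule R M) : Prop :=
  c 0 = ⊤ ∧ c (Fin.last m) = ⊥ ∧ StrictAnti c ∧ StrictAnti t ∧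
  (∀ i, IsStrictSub G (c i)) ∧
  ∀ k : Fin m, W (t k) (ModuleCat.of R
    (↥(c k.castSucc) ⧸ Submodule.comap (c k.castSucc).subtype (c k.succ)))

/-- A strict HN-stratification of `G`: slices are pseudo-wide subcategories
indexed by a totally ordered set, with no nonzero strict morphisms backwards,
such that every object of `G` has a strict filtration with subquotients in
decreasing slices. -/
structure IsHNStratification (G : ModuleCat.{0} R → Prop) {S : Type} [LinearOrder S]
    (W : S → ModuleCat.{0} R → Prop) : Prop where
  wide : ∀ s : S, IsPseudoWide G (W s)
  no_backward : ∀ s₀ s₁ : S, s₀ < s₁ → ∀ X Y : ModuleCat.{0} R, W s₀ X → W s₁ Y →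
      ∀ f : X →ₗ[R] Y, IsStrictMorphism G f → f = 0
  filt : ∀ M : ModuleCat.{0} R, G M → ∃ (m : ℕ) (t : Fin m → S)
      (c : Fin (m + 1) → Submodule R ↥M), IsSliceFiltration G W m t c

/-- Auxiliary: membership in `G` is invariant under linear equivalence of submodule-types. -/
lemma mem_of_equiv {G : ModuleCat.{0} R → Prop} (hG : IsTorsionClass G)
    {M N : Type} [AddCommGroup M] [Module R M] [AddCommGroup N] [Module R N]
    (e : M ≃ₗ[R] N) (h : Mem G M) : Mem G N :=
  hG.iso_closed M N e h

/-- Auxiliary: the image of a submodule in `G` lies in `G` (quotient closure). -/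
lemma mem_map_of_mem {G : ModuleCat.{0} R → Prop} (hG : IsTorsionClass G)
    {M N : Type} [AddCommGroup M] [Module R M] [AddCommGroup N] [Module R N]
    (g : M →ₗ[R] N) (P : Submodule R M) (hP : Mem G ↥P) :
    Mem G ↥(Submodule.map g P) := by
  have h : LinearMap.range (g ∘ₗ P.subtype) = Submodule.map g P := by
    rw [LinearMap.range_comp, Submodule.range_subtype]
  have e : (↥P ⧸ LinearMap.ker (g ∘ₗ P.subtype)) ≃ₗ[R] ↥(Submodule.map g P) :=
    (LinearMap.quotKerEquivRange _).trans (LinearEquiv.ofEq _ _ h)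
  exact mem_of_equiv hG e (hG.quot_closed ↥P _ hP)

theorem statement_2 (k : Type) [Field k] [Algebra k R] [FiniteDimensional k R]
    (G : ModuleCat.{0} R → Prop) (hG : IsTorsionClass G)
    (hfin : ∀ M : ModuleCat.{0} R, G M → Module.Finite R ↥M)
    (A B C : Type) [AddCommGroup A] [Module R A] [AddCommGroup B] [Module R B]
    [AddCommGroup C] [Module R C]
    (hA : Mem G A) (hB : Mem G B) (hC : Mem G C)
    (f : A →ₗ[R] B) (g : B →ₗ[R] C)
    (hf : Function.Injective f) (hg : Function.Surjective g)
    (hfg : LinearMap.range f = LinearMap.ker g)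
    (B' : Submodule R B) (hB' : IsStrictSub G B') :
    IsStrictSub G (Submodule.comap f B') ∧ IsStrictSub G (Submodule.map g B') := by
  -- `range f ∈ G` since `range f ≅ A`.
  have hrange : Mem G ↥(LinearMap.range f) :=
    mem_of_equiv hG (LinearEquiv.ofInjective f hf) hA
  constructor
  · constructor
    · -- A' = f⁻¹(B') ≅ range f ⊓ B' = B' ⊓ range f ∈ G by strictness of B'.
      have e := Submodule.equivMapOfInjective f hf (Submodule.comap f B')
      rw [Submodule.map_comap_eq, inf_comm] at e
      exact mem_of_equiv hG e.symm (hB'.2 _ hrange)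
    · intro X hX
      have hXmap : Mem G ↥(Submodule.map f X) :=
        mem_of_equiv hG (Submodule.equivMapOfInjective f hf X) hX
      have e := Submodule.equivMapOfInjective f hf (Submodule.comap f B' ⊓ X)
      rw [Submodule.map_inf f hf, Submodule.map_comap_eq] at e
      have heq : LinearMap.range f ⊓ B' ⊓ Submodule.map f X = B' ⊓ Submodule.map f X := by
        rw [inf_comm (LinearMap.range f) B', inf_assoc,
          inf_eq_right.mpr (LinearMap.map_le_range : Submodule.map f X ≤ LinearMap.range f)]
      rw [heq] at e
      exact mem_of_equiv hG e.symm (hB'.2 _ hXmap)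
  · constructor
    · exact mem_map_of_mem hG g B' hB'.1
    · intro X hX
      -- E = g⁻¹(X) is an extension of X by ker g = range f ≅ A, hence E ∈ G.
      set E := Submodule.comap g X with hE
      have hkf : ∀ a : A, f a ∈ E := by
        intro a
        have : f a ∈ LinearMap.ker g := hfg ▸ LinearMap.mem_range_self f a
        simpa [hE, Submodule.mem_comap, LinearMap.mem_ker.mp this] using X.zero_mem
      set j : A →ₗ[R] ↥E := f.codRestrict E hkf with hj
      set q : ↥E →ₗ[R] ↥X := (g ∘ₗ E.subtype).codRestrict X (fun e => e.2) with hq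
      have hjinj : Function.Injective j := by
        intro a b hab
        exact hf (congrArg Subtype.val hab)
      have hqsurj : Function.Surjective q := by
        intro x
        obtain ⟨b, hb⟩ := hg x.1
        refine ⟨⟨b, ?_⟩, ?_⟩
        · simp [hE, Submodule.mem_comap, hb]
        · ext; exact hb
      have hjq : LinearMap.range j = LinearMap.ker q := by
        ext e
        simp only [LinearMap.mem_range, LinearMap.mem_ker]
        constructor
        · rintro ⟨a, rfl⟩
          ext
          exact LinearMap.mem_ker.mp (hfg ▸ LinearMap.mem_range_self f a : f a ∈ LinearMap.ker g)
        · intro he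
          have : (e : B) ∈ LinearMap.ker g := by
            have := congrArg Subtype.val he
            exact this
          obtain ⟨a, ha⟩ := (hfg ▸ this : (e : B) ∈ LinearMap.range f)
          exact ⟨a, by ext; simpa [hj] using ha⟩
      have hEmem : Mem G ↥E := hG.ext_closed A ↥E ↥X j q hjinj hqsurj hjq hA hX
      -- map g B' ⊓ X = map g (B' ⊓ E), a quotient of B' ⊓ E ∈ G.
      have hinf : Mem G ↥(B' ⊓ E) := hB'.2 E hEmem
      have heq : Submodule.map g B' ⊓ X = Submodule.map g (B' ⊓ E) :=
        Submodule.map_inf_eq_map_inf_comap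
      rw [heq]
      exact mem_map_of_mem hG g (B' ⊓ E) hinf

end PaperTC
end

section
/- Let 𝒢 be a torsion class in mod-Λ. The following descriptions of strict subquotients of M ∈ 𝒢 define the same class of objects: (a) strict quotients of strict subobjects of M; (b) strict subobjects of strict quotients of M; (c) quotients B/A where A ⊆ B are both strict subobjects of M. -/
/-!
Common framework: a torsion class `𝒢` in `mod-Λ` is modelled as a predicate
`G : ModuleCat R → Prop` (closed under isomorphism, quotients and extensions).
Strict subobjects, fibrations, cofibrations, strict morphisms, pseudo-torsion
classes etc. follow the definitions of the paper.
-/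

namespace PaperTC

variable {R : Type} [Ring R]

namespace PaperTCAux

open Submodule

variable {R : Type} [Ring R] {G : ModuleCat.{0} R → Prop}

theorem mem_congr (hG : PaperTC.IsTorsionClass G) {M N : Type} [AddCommGroup M] [Module R M]
    [AddCommGroup N] [Module R N] (e : M ≃ₗ[R] N) (h : PaperTC.Mem G M) : PaperTC.Mem G N :=
  hG.iso_closed M N e h

/-- `comap B.subtype A` is isomorphic to `B ⊓ A`. -/
noncomputable def comapSubtypeEquiv {M : Type} [AddCommGroup M] [Module R M]
    (B A : Submodule R M) : ↥(Submodule.comap B.subtype A) ≃ₗ[R] ↥(B ⊓ A) :=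
  (Submodule.equivMapOfInjective B.subtype B.injective_subtype _).trans
    (LinearEquiv.ofEq _ _ (Submodule.map_comap_subtype B A))

/-- `↥P ⧸ comap P.subtype A ≃ map A.mkQ P`. -/
noncomputable def quotComapEquivMapMkQ {M : Type} [AddCommGroup M] [Module R M]
    (A P : Submodule R M) :
    (↥P ⧸ Submodule.comap P.subtype A) ≃ₗ[R] ↥(Submodule.map A.mkQ P) :=
  (Submodule.quotEquivOfEq _ _
      (by rw [LinearMap.ker_comp, Submodule.ker_mkQ])).trans <|
    (A.mkQ ∘ₗ P.subtype).quotKerEquivRange.trans <|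
      LinearEquiv.ofEq _ _ (by rw [LinearMap.range_comp, Submodule.range_subtype])

/-- The image of a `G`-module is in `G`. -/
theorem mem_map (hG : PaperTC.IsTorsionClass G) {M N : Type} [AddCommGroup M] [Module R M]
    [AddCommGroup N] [Module R N] (f : M →ₗ[R] N) {P : Submodule R M}
    (hP : PaperTC.Mem G ↥P) : PaperTC.Mem G ↥(Submodule.map f P) := by
  have h1 : PaperTC.Mem G (↥P ⧸ LinearMap.ker (f ∘ₗ P.subtype)) := hG.quot_closed ↥P _ hP
  refine mem_congr hG ((f ∘ₗ P.subtype).quotKerEquivRange.trans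
    (LinearEquiv.ofEq _ _ ?_)) h1
  rw [LinearMap.range_comp, Submodule.range_subtype]

/-- Closure under extensions, submodule form. -/
theorem mem_ext (hG : PaperTC.IsTorsionClass G) (T : Type) [AddCommGroup T] [Module R T]
    (K : Submodule R T) (h1 : PaperTC.Mem G ↥K) (h2 : PaperTC.Mem G (T ⧸ K)) :
    PaperTC.Mem G T :=
  hG.ext_closed ↥K T (T ⧸ K) K.subtype K.mkQ K.injective_subtype (Submodule.mkQ_surjective K)
    (by rw [Submodule.range_subtype, Submodule.ker_mkQ]) h1 h2

theorem le_comap_mkQ' {M : Type} [AddCommGroup M] [Module R M] (A : Submodule R M)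
    (S : Submodule R (M ⧸ A)) : A ≤ Submodule.comap A.mkQ S := fun x hx => by
  have : A.mkQ x = 0 := by
    simpa [Submodule.mkQ_apply] using (Submodule.Quotient.mk_eq_zero A).mpr hx
  simp only [Submodule.mem_comap, this]
  exact S.zero_mem

/-- Preimage under `mkQ` of a `G`-submodule, with `G` kernel, is in `G`. -/
theorem mem_comap_mkQ (hG : PaperTC.IsTorsionClass G) {M : Type} [AddCommGroup M] [Module R M]
    (A : Submodule R M) (hA : PaperTC.Mem G ↥A) (X : Submodule R (M ⧸ A))
    (hX : PaperTC.Mem G ↥X) : PaperTC.Mem G ↥(Submodule.comap A.mkQ X) := by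
  set X' := Submodule.comap A.mkQ X with hX'def
  have hAX' : A ≤ X' := le_comap_mkQ' A X
  apply mem_ext hG _ (Submodule.comap X'.subtype A)
  · exact mem_congr hG ((comapSubtypeEquiv X' A).trans
      (LinearEquiv.ofEq _ _ (inf_eq_right.mpr hAX'))).symm hA
  · have hmap : Submodule.map A.mkQ X' = X :=
      Submodule.map_comap_eq_of_surjective (Submodule.mkQ_surjective A) X
    exact mem_congr hG ((quotComapEquivMapMkQ A X').trans
      (LinearEquiv.ofEq _ _ hmap)).symm hX

/-- (L1) Restriction: a strict subobject `A ≤ B` of `M` gives a strict subobject of `B`. -/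
theorem strict_restrict (hG : PaperTC.IsTorsionClass G) {M : Type} [AddCommGroup M]
    [Module R M] {A B : Submodule R M} (hA : PaperTC.IsStrictSub G A)
    (hB : PaperTC.IsStrictSub G B) (hAB : A ≤ B) :
    PaperTC.IsStrictSub G (Submodule.comap B.subtype A) := by
  constructor
  · exact mem_congr hG ((comapSubtypeEquiv B A).trans
      (LinearEquiv.ofEq _ _ (inf_eq_right.mpr hAB))).symm hA.1
  · intro X' hX'
    have hmX' : PaperTC.Mem G ↥(Submodule.map B.subtype X') := mem_map hG _ hX'
    have h2 := hA.2 _ hmX'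
    refine mem_congr hG (LinearEquiv.symm ?_) h2
    refine (Submodule.equivMapOfInjective B.subtype B.injective_subtype _).trans
      (LinearEquiv.ofEq _ _ ?_)
    rw [Submodule.map_inf _ B.injective_subtype, Submodule.map_comap_subtype,
      inf_eq_right.mpr hAB]

/-- (L2) A strict subobject of a strict subobject is strict. -/
theorem strict_map_subtype (hG : PaperTC.IsTorsionClass G) {M : Type} [AddCommGroup M]
    [Module R M] {B : Submodule R M} (hB : PaperTC.IsStrictSub G B)
    {A : Submodule R ↥B} (hA : PaperTC.IsStrictSub G A) :
    PaperTC.IsStrictSub G (Submodule.map B.subtype A) := by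
  refine ⟨mem_congr hG (Submodule.equivMapOfInjective B.subtype B.injective_subtype A)
    hA.1, ?_⟩
  intro X hX
  have h1 : PaperTC.Mem G ↥(B ⊓ X) := hB.2 X hX
  have h2 : PaperTC.Mem G ↥(Submodule.comap B.subtype X) :=
    mem_congr hG (comapSubtypeEquiv B X).symm h1
  have h3 := hA.2 _ h2
  refine mem_congr hG ((Submodule.equivMapOfInjective B.subtype B.injective_subtype
    _).trans (LinearEquiv.ofEq _ _ ?_)) h3
  rw [Submodule.map_inf _ B.injective_subtype, Submodule.map_comap_subtype,
    ← inf_assoc, inf_eq_left.mpr (Submodule.map_subtype_le B A)]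

/-- (L3) Image in the strict quotient `M ⧸ A` of a strict subobject `B ⊇ A` is strict. -/
theorem strict_map_mkQ (hG : PaperTC.IsTorsionClass G) {M : Type} [AddCommGroup M]
    [Module R M] {A B : Submodule R M} (hA : PaperTC.IsStrictSub G A)
    (hB : PaperTC.IsStrictSub G B) (_hAB : A ≤ B) :
    PaperTC.IsStrictSub G (Submodule.map A.mkQ B) := by
  refine ⟨mem_congr hG (quotComapEquivMapMkQ A B) (hG.quot_closed ↥B _ hB.1), ?_⟩
  intro X hX
  have hmX' : PaperTC.Mem G ↥(Submodule.comap A.mkQ X) := mem_comap_mkQ hG A hA.1 X hX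
  have h1 : PaperTC.Mem G ↥(B ⊓ Submodule.comap A.mkQ X) := hB.2 _ hmX'
  have h2 : PaperTC.Mem G ↥(Submodule.map A.mkQ (B ⊓ Submodule.comap A.mkQ X)) :=
    mem_map hG A.mkQ h1
  have heq : Submodule.map A.mkQ (B ⊓ Submodule.comap A.mkQ X) =
      Submodule.map A.mkQ B ⊓ X := by
    ext y
    simp only [Submodule.mem_map, Submodule.mem_inf, Submodule.mem_comap]
    constructor
    · rintro ⟨x, ⟨hxB, hxX⟩, rfl⟩; exact ⟨⟨x, hxB, rfl⟩, hxX⟩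
    · rintro ⟨⟨x, hxB, rfl⟩, hyX⟩; exact ⟨x, ⟨hxB, hyX⟩, rfl⟩
  exact mem_congr hG (LinearEquiv.ofEq _ _ heq) h2

/-- (L4) Preimage in `M` of a strict subobject of a strict quotient is strict. -/
theorem strict_comap_mkQ (hG : PaperTC.IsTorsionClass G) {M : Type} [AddCommGroup M]
    [Module R M] {A : Submodule R M} (hA : PaperTC.IsStrictSub G A)
    {S : Submodule R (M ⧸ A)} (hS : PaperTC.IsStrictSub G S) :
    PaperTC.IsStrictSub G (Submodule.comap A.mkQ S) := by
  set B := Submodule.comap A.mkQ S with hBdef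
  have hAB : A ≤ B := le_comap_mkQ' A S
  refine ⟨mem_comap_mkQ hG A hA.1 S hS.1, ?_⟩
  intro X hX
  have h1 : PaperTC.Mem G ↥(A ⊓ X) := hA.2 X hX
  have h2 : PaperTC.Mem G ↥(S ⊓ Submodule.map A.mkQ X) := hS.2 _ (mem_map hG A.mkQ hX)
  apply mem_ext hG _ (Submodule.comap (B ⊓ X).subtype A)
  · have hinf : (B ⊓ X) ⊓ A = A ⊓ X := by
      rw [inf_comm B X, inf_assoc, inf_eq_right.mpr hAB, inf_comm X A]
    exact mem_congr hG ((comapSubtypeEquiv _ A).trans (LinearEquiv.ofEq _ _ hinf)).symm h1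
  · have heq : Submodule.map A.mkQ (B ⊓ X) = S ⊓ Submodule.map A.mkQ X := by
      ext y
      simp only [Submodule.mem_map, Submodule.mem_inf, Submodule.mem_comap, hBdef]
      constructor
      · rintro ⟨x, ⟨hxS, hxX⟩, rfl⟩; exact ⟨hxS, x, hxX, rfl⟩
      · rintro ⟨hyS, x, hxX, rfl⟩; exact ⟨x, ⟨hyS, hxX⟩, rfl⟩
    exact mem_congr hG ((quotComapEquivMapMkQ A (B ⊓ X)).trans
      (LinearEquiv.ofEq _ _ heq)).symm h2

end PaperTCAux


theorem statement_5 (k : Type) [Field k] [Algebra k R] [FiniteDimensional k R]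
    (G : ModuleCat.{0} R → Prop) (hG : IsTorsionClass G)
    (hfin : ∀ M : ModuleCat.{0} R, G M → Module.Finite R ↥M)
    (M : Type) [AddCommGroup M] [Module R M] (hM : Mem G M)
    (X : Type) [AddCommGroup X] [Module R X] :
    ((∃ B : Submodule R M, IsStrictSub G B ∧ ∃ A : Submodule R ↥B, IsStrictSub G A ∧
        Nonempty (X ≃ₗ[R] (↥B ⧸ A))) ↔
      (∃ A : Submodule R M, IsStrictSub G A ∧ ∃ S : Submodule R (M ⧸ A),
        IsStrictSub G S ∧ Nonempty (X ≃ₗ[R] ↥S))) ∧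
    ((∃ A : Submodule R M, IsStrictSub G A ∧ ∃ S : Submodule R (M ⧸ A),
        IsStrictSub G S ∧ Nonempty (X ≃ₗ[R] ↥S)) ↔
      (∃ A B : Submodule R M, IsStrictSub G A ∧ IsStrictSub G B ∧ A ≤ B ∧
        Nonempty (X ≃ₗ[R] (↥B ⧸ Submodule.comap B.subtype A)))) := by
  have hAC : (∃ B : Submodule R M, IsStrictSub G B ∧ ∃ A : Submodule R ↥B, IsStrictSub G A ∧
        Nonempty (X ≃ₗ[R] (↥B ⧸ A))) ↔
      (∃ A B : Submodule R M, IsStrictSub G A ∧ IsStrictSub G B ∧ A ≤ B ∧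
        Nonempty (X ≃ₗ[R] (↥B ⧸ Submodule.comap B.subtype A))) := by
    constructor
    · rintro ⟨B, hB, A, hA, ⟨e⟩⟩
      refine ⟨Submodule.map B.subtype A, B, PaperTCAux.strict_map_subtype hG hB hA, hB,
        Submodule.map_subtype_le B A, ⟨e.trans (Submodule.quotEquivOfEq A _
          (Submodule.comap_map_eq_of_injective B.injective_subtype A).symm)⟩⟩
    · rintro ⟨A, B, hA, hB, hAB, ⟨e⟩⟩
      exact ⟨B, hB, Submodule.comap B.subtype A,
        PaperTCAux.strict_restrict hG hA hB hAB, ⟨e⟩⟩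
  have hBC : (∃ A : Submodule R M, IsStrictSub G A ∧ ∃ S : Submodule R (M ⧸ A),
        IsStrictSub G S ∧ Nonempty (X ≃ₗ[R] ↥S)) ↔
      (∃ A B : Submodule R M, IsStrictSub G A ∧ IsStrictSub G B ∧ A ≤ B ∧
        Nonempty (X ≃ₗ[R] (↥B ⧸ Submodule.comap B.subtype A))) := by
    constructor
    · rintro ⟨A, hA, S, hS, ⟨e⟩⟩
      have e2 : (↥(Submodule.comap A.mkQ S) ⧸
          Submodule.comap (Submodule.comap A.mkQ S).subtype A) ≃ₗ[R] ↥S :=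
        (PaperTCAux.quotComapEquivMapMkQ A (Submodule.comap A.mkQ S)).trans
          (LinearEquiv.ofEq _ _ (Submodule.map_comap_eq_of_surjective
            (Submodule.mkQ_surjective A) S))
      exact ⟨A, Submodule.comap A.mkQ S, hA, PaperTCAux.strict_comap_mkQ hG hA hS,
        PaperTCAux.le_comap_mkQ' A S, ⟨e.trans e2.symm⟩⟩
    · rintro ⟨A, B, hA, hB, hAB, ⟨e⟩⟩
      exact ⟨A, hA, Submodule.map A.mkQ B, PaperTCAux.strict_map_mkQ hG hA hB hAB,
        ⟨e.trans (PaperTCAux.quotComapEquivMapMkQ A B)⟩⟩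
  exact ⟨hAC.trans hBC.symm, hBC⟩

end PaperTC
end

section
/- Let 𝒢 be a torsion class in mod-Λ and f : A → B a strict morphism. Then f has a kernel and cokernel in the strict category 𝒢 agreeing with those in mod-Λ: (1) if g : X → A is strict with f∘g = 0, the induced map X → ker f is strict; (2) if h : B → Y is strict with h∘f = 0, the induced map coker f → Y is strict. -/
/-!
Common framework: a torsion class `𝒢` in `mod-Λ` is modelled as a predicate
`G : ModuleCat R → Prop` (closed under isomorphism, quotients and extensions).
Strict subobjects, fibrations, cofibrations, strict morphisms, pseudo-torsion
classes etc. follow the definitions of the paper.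
-/

namespace PaperTC

variable {R : Type} [Ring R]

lemma mem_equiv_iff {G : ModuleCat.{0} R → Prop} (hG : IsTorsionClass G)
    {M N : Type} [AddCommGroup M] [Module R M] [AddCommGroup N] [Module R N]
    (e : M ≃ₗ[R] N) : Mem G M ↔ Mem G N :=
  ⟨hG.iso_closed M N e, hG.iso_closed N M e.symm⟩

lemma mem_map {G : ModuleCat.{0} R → Prop} (hG : IsTorsionClass G)
    {M N : Type} [AddCommGroup M] [Module R M] [AddCommGroup N] [Module R N]
    (φ : M →ₗ[R] N) {S : Submodule R M} (hS : Mem G ↥S) : Mem G ↥(S.map φ) := by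
  have hr : LinearMap.range (φ.comp S.subtype) = S.map φ := by
    rw [LinearMap.range_comp, Submodule.range_subtype]
  have e := (φ.comp S.subtype).quotKerEquivRange
  have hq : Mem G (↥S ⧸ LinearMap.ker (φ.comp S.subtype)) :=
    hG.quot_closed _ _ hS
  exact hG.iso_closed _ _ (e.trans (LinearEquiv.ofEq _ _ hr)) hq

theorem statement_6 (k : Type) [Field k] [Algebra k R] [FiniteDimensional k R]
    (G : ModuleCat.{0} R → Prop) (hG : IsTorsionClass G)
    (hfin : ∀ M : ModuleCat.{0} R, G M → Module.Finite R ↥M)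
    (A B : Type) [AddCommGroup A] [Module R A] [AddCommGroup B] [Module R B]
    (hA : Mem G A) (hB : Mem G B)
    (f : A →ₗ[R] B) (hf : IsStrictMorphism G f) :
    (∀ (X : Type) [AddCommGroup X] [Module R X], Mem G X →
      ∀ (g : X →ₗ[R] A), IsStrictMorphism G g →
      ∀ (h0 : ∀ x, g x ∈ LinearMap.ker f),
      IsStrictMorphism G (LinearMap.codRestrict (LinearMap.ker f) g h0)) ∧
    (∀ (Y : Type) [AddCommGroup Y] [Module R Y], Mem G Y →
      ∀ (h : B →ₗ[R] Y), IsStrictMorphism G h →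
      ∀ (h0 : LinearMap.range f ≤ LinearMap.ker h),
      IsStrictMorphism G (Submodule.liftQ (LinearMap.range f) h h0)) := by
  constructor
  · intro X _ _ hX g hg h0
    set K := LinearMap.ker f
    set g' := LinearMap.codRestrict K g h0 with hg'
    have hsub : K.subtype.comp g' = g := LinearMap.subtype_comp_codRestrict g K h0
    have hker : LinearMap.ker g' = LinearMap.ker g := LinearMap.ker_codRestrict K g h0
    have hmapr : (LinearMap.range g').map K.subtype = LinearMap.range g := by
      rw [← LinearMap.range_comp, hsub]
    have hinj : Function.Injective K.subtype := Submodule.injective_subtype K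
    constructor
    · rw [hker]; exact hg.1
    · constructor
      · refine (mem_equiv_iff hG (Submodule.equivMapOfInjective K.subtype hinj _)).2 ?_
        rw [hmapr]; exact hg.2.1
      · intro B' hB'
        refine (mem_equiv_iff hG (Submodule.equivMapOfInjective K.subtype hinj _)).2 ?_
        rw [Submodule.map_inf _ hinj, hmapr]
        exact hg.2.2 _ (mem_map hG K.subtype hB')
  · intro Y _ _ hY h hh h0
    set F := LinearMap.range f
    set h' := Submodule.liftQ F h h0 with hh'
    have hker : LinearMap.ker h' = (LinearMap.ker h).map F.mkQ :=
      Submodule.ker_liftQ F h h0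
    have hrange : LinearMap.range h' = LinearMap.range h :=
      Submodule.range_liftQ F h h0
    have hsurj : Function.Surjective F.mkQ := Submodule.mkQ_surjective F
    constructor
    · constructor
      · rw [hker]; exact mem_map hG F.mkQ hh.1.1
      · intro B' hB'
        set B'' := Submodule.comap F.mkQ B' with hB''def
        have hmapB'' : B''.map F.mkQ = B' := Submodule.map_comap_eq_of_surjective hsurj B'
        have hFB'' : F ≤ B'' := by
          intro x hx
          have hx0 : F.mkQ x = 0 := by
            simpa [Submodule.mkQ_apply, Submodule.Quotient.mk_eq_zero] using hx
          simp [hB''def, Submodule.mem_comap, hx0]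
        have hB''G : Mem G ↥B'' := by
          have e1 : Function.Injective ((Submodule.comap B''.subtype F).subtype) :=
            Submodule.injective_subtype _
          -- extension 0 → F → B'' → B' → 0
          refine hG.ext_closed ↥(Submodule.comap B''.subtype F) ↥B'' ↥B'
            (Submodule.comap B''.subtype F).subtype
            (LinearMap.codRestrict B' (F.mkQ.comp B''.subtype) ?_) e1 ?_ ?_ ?_ ?_
          · intro x; exact Submodule.mem_comap.1 x.2
          · rintro ⟨y, hy⟩
            obtain ⟨b, hb⟩ := hsurj y
            have hbB'' : b ∈ B'' := by simp [hB''def, hb, hy]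
            exact ⟨⟨b, hbB''⟩, Subtype.ext hb⟩
          · rw [LinearMap.ker_codRestrict, LinearMap.ker_comp, Submodule.ker_mkQ,
              Submodule.range_subtype]
          · have : Mem G ↥(Submodule.comap B''.subtype F) := by
              refine (mem_equiv_iff hG (Submodule.equivMapOfInjective B''.subtype
                (Submodule.injective_subtype _) _)).2 ?_
              have : (Submodule.comap B''.subtype F).map B''.subtype = F := by
                rw [Submodule.map_comap_eq, Submodule.range_subtype,
                  inf_eq_right.2 hFB'']
              rw [this]; exact hf.2.1
            exact this
          · exact hB'
        have key : LinearMap.ker h' ⊓ B' = (LinearMap.ker h ⊓ B'').map F.mkQ := by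
          rw [hker]
          rw [← Submodule.map_comap_eq_of_surjective hsurj
            ((LinearMap.ker h).map F.mkQ ⊓ B'), Submodule.comap_inf,
            Submodule.comap_map_eq, Submodule.ker_mkQ,
            sup_eq_left.2 (h0 : F ≤ LinearMap.ker h), hB''def]
        rw [key]
        exact mem_map hG F.mkQ (hh.1.2 B'' hB''G)
    · rw [hrange]; exact hh.2


end PaperTC
end

section
/- Let 𝒢 be a torsion class in mod-Λ and 𝒳 ⊆ 𝒢 any subclass. Then the left perpendicular class ⟂𝒳 (all X ∈ 𝒢 with no nonzero strict morphism to any object of 𝒳) is a pseudo-torsion class, i.e., it is closed under strict quotients and strict extensions. -/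
/-!
Common framework: a torsion class `𝒢` in `mod-Λ` is modelled as a predicate
`G : ModuleCat R → Prop` (closed under isomorphism, quotients and extensions).
Strict subobjects, fibrations, cofibrations, strict morphisms, pseudo-torsion
classes etc. follow the definitions of the paper.
-/

namespace PaperTC

variable {R : Type} [Ring R]

section perpProof

variable {M' N' : Type}

lemma PTC_eq1 {B C : Type} [AddCommGroup B] [Module R B] [AddCommGroup C] [Module R C]
    (g : B →ₗ[R] C) (D : Submodule R C) :
    LinearMap.ker g ⊓ Submodule.comap g D = LinearMap.ker g :=
  inf_eq_left.mpr (by rw [← Submodule.comap_bot]; exact Submodule.comap_mono bot_le)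

lemma PTC_eq3 {B C : Type} [AddCommGroup B] [Module R B] [AddCommGroup C] [Module R C]
    (g : B →ₗ[R] C) (D : Submodule R C) (B' : Submodule R B) :
    Submodule.map g (Submodule.comap g D ⊓ B') = D ⊓ Submodule.map g B' := by
  ext x
  simp only [Submodule.mem_map, Submodule.mem_inf, Submodule.mem_comap]
  constructor
  · rintro ⟨a, ⟨hd, hb⟩, rfl⟩
    exact ⟨hd, a, hb, rfl⟩
  · rintro ⟨hd, a, hb, rfl⟩
    exact ⟨a, ⟨hd, hb⟩, rfl⟩

lemma PTC_eq4 {B C : Type} [AddCommGroup B] [Module R B] [AddCommGroup C] [Module R C]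
    (g : B →ₗ[R] C) (A' : Submodule R B) (B' : Submodule R C) :
    Submodule.map g A' ⊓ B' = Submodule.map g (A' ⊓ Submodule.comap g B') := by
  ext x
  simp only [Submodule.mem_map, Submodule.mem_inf, Submodule.mem_comap]
  constructor
  · rintro ⟨⟨a, ha, rfl⟩, hb⟩
    exact ⟨a, ⟨ha, hb⟩, rfl⟩
  · rintro ⟨a, ⟨ha, hb⟩, rfl⟩
    exact ⟨⟨a, ha, rfl⟩, hb⟩

lemma PTC_eq5 {B C : Type} [AddCommGroup B] [Module R B] [AddCommGroup C] [Module R C]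
    (g : B →ₗ[R] C) (D : Submodule R C) (B' : Submodule R B) :
    LinearMap.ker g ⊓ (Submodule.comap g D ⊓ B') = LinearMap.ker g ⊓ B' := by
  rw [← inf_assoc, PTC_eq1]

variable {G : ModuleCat.{0} R → Prop} (hG : IsTorsionClass G)
include hG

lemma memG_ofEq {M : Type} [AddCommGroup M] [Module R M] {S T : Submodule R M}
    (h : S = T) (hS : Mem G ↥S) : Mem G ↥T :=
  hG.iso_closed _ _ (LinearEquiv.ofEq S T h) hS

lemma memG_map {B C : Type} [AddCommGroup B] [Module R B] [AddCommGroup C] [Module R C]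
    (g : B →ₗ[R] C) (A' : Submodule R B) (h : Mem G ↥A') :
    Mem G ↥(Submodule.map g A') := by
  have h1 : Mem G (↥A' ⧸ LinearMap.ker (g.comp A'.subtype)) := hG.quot_closed _ _ h
  have e : (↥A' ⧸ LinearMap.ker (g.comp A'.subtype)) ≃ₗ[R] ↥(Submodule.map g A') := by
    refine (g.comp A'.subtype).quotKerEquivRange.trans (LinearEquiv.ofEq _ _ ?_)
    rw [LinearMap.range_comp, Submodule.range_subtype]
  exact hG.iso_closed _ _ e h1

lemma memG_ext_sub {M N : Type} [AddCommGroup M] [Module R M] [AddCommGroup N] [Module R N]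
    (π : M →ₗ[R] N) (S : Submodule R M)
    (h1 : Mem G ↥(LinearMap.ker π ⊓ S)) (h2 : Mem G ↥(Submodule.map π S)) : Mem G ↥S := by
  have hle : LinearMap.ker π ⊓ S ≤ S := inf_le_right
  have hmem : ∀ x ∈ S, π x ∈ Submodule.map π S := fun x hx => Submodule.mem_map_of_mem hx
  refine hG.ext_closed _ _ _ (Submodule.inclusion hle) (π.restrict hmem)
    (Submodule.inclusion_injective hle) ?_ ?_ h1 h2
  · rintro ⟨y, x, hx, rfl⟩
    exact ⟨⟨x, hx⟩, rfl⟩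
  · ext ⟨x, hx⟩
    constructor
    · rintro ⟨⟨y, hy⟩, h⟩
      have hxy : y = x := congrArg Subtype.val h
      subst hxy
      refine LinearMap.mem_ker.mpr (Subtype.ext ?_)
      simpa [LinearMap.restrict_apply] using hy.1
    · intro hk
      exact ⟨⟨x, ⟨by simpa using Subtype.ext_iff.mp hk, hx⟩⟩, rfl⟩

lemma strict_bot {M : Type} [AddCommGroup M] [Module R M] :
    IsStrictSub G (⊥ : Submodule R M) := by
  have hsub : Subsingleton ↥(⊥ : Submodule R M) :=
    ⟨fun a b => Subtype.ext (by rw [(Submodule.mem_bot R).mp a.2, (Submodule.mem_bot R).mp b.2])⟩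
  refine ⟨hG.zero_mem _ hsub, fun B' _ => memG_ofEq hG (bot_inf_eq B').symm (hG.zero_mem _ hsub)⟩

lemma strict_comap {B C : Type} [AddCommGroup B] [Module R B] [AddCommGroup C] [Module R C]
    (g : B →ₗ[R] C) (hker : IsStrictSub G (LinearMap.ker g))
    (hrg : Mem G ↥(LinearMap.range g)) {D : Submodule R C} (hD : IsStrictSub G D) :
    IsStrictSub G (Submodule.comap g D) := by
  constructor
  · refine memG_ext_sub hG g _ (memG_ofEq hG (PTC_eq1 g D).symm hker.1) ?_
    refine memG_ofEq hG ?_ (hD.2 _ hrg)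
    rw [Submodule.map_comap_eq]
    exact (inf_comm _ _)
  · intro B' hB'
    refine memG_ext_sub hG g _ (memG_ofEq hG (PTC_eq5 g D B').symm (hker.2 B' hB')) ?_
    exact memG_ofEq hG (PTC_eq3 g D B').symm (hD.2 _ (memG_map hG g B' hB'))

lemma strict_map {B C : Type} [AddCommGroup B] [Module R B] [AddCommGroup C] [Module R C]
    (g : B →ₗ[R] C) (hker : Mem G ↥(LinearMap.ker g))
    (hr : ∀ B' : Submodule R C, Mem G ↥B' → Mem G ↥(LinearMap.range g ⊓ B'))
    {A' : Submodule R B} (hA : IsStrictSub G A') :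
    IsStrictSub G (Submodule.map g A') := by
  constructor
  · exact memG_map hG g A' hA.1
  · intro B' hB'
    refine memG_ofEq hG (PTC_eq4 g A' B').symm ?_
    refine memG_map hG g _ (hA.2 _ ?_)
    refine memG_ext_sub hG g _ (memG_ofEq hG (PTC_eq1 g B').symm hker) ?_
    exact memG_ofEq hG (Submodule.map_comap_eq g B').symm (hr B' hB')

end perpProof

theorem statement_7 (k : Type) [Field k] [Algebra k R] [FiniteDimensional k R]
    (G : ModuleCat.{0} R → Prop) (hG : IsTorsionClass G)
    (hfin : ∀ M : ModuleCat.{0} R, G M → Module.Finite R ↥M)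
    (X : ModuleCat.{0} R → Prop) (hX : ∀ M : ModuleCat.{0} R, X M → G M) :
    IsPseudoTorsionClass G (fun M : ModuleCat.{0} R => MemLeftPerp G X ↥M) := by
  constructor
  · exact fun M hM => hM.1
  · intro M _ _ hsub hGM
    refine ⟨hGM, fun N hN f _ => ?_⟩
    ext x
    show f x = 0
    rw [Subsingleton.elim (α := M) x 0, map_zero]
  · -- closed under strict quotients
    intro M _ _ A hA hM
    have hM' : MemLeftPerp G X M := hM
    obtain ⟨hGM, hperp⟩ := hM'
    have hGQ : Mem G (M ⧸ A) := hG.quot_closed M A hGM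
    refine ⟨hGQ, ?_⟩
    intro N hN f hf
    have hπsurj : Function.Surjective A.mkQ := A.mkQ_surjective
    have hkerπ : IsStrictSub G (LinearMap.ker A.mkQ) := by
      rw [Submodule.ker_mkQ]; exact hA
    have hrgπ : Mem G ↥(LinearMap.range A.mkQ) := by
      rw [Submodule.range_mkQ]
      exact hG.iso_closed _ _ Submodule.topEquiv.symm hGQ
    have hcomp : IsStrictMorphism G (f.comp A.mkQ) := by
      constructor
      · rw [LinearMap.ker_comp]
        exact strict_comap hG A.mkQ hkerπ hrgπ hf.1
      · rw [LinearMap.range_comp, Submodule.range_mkQ, Submodule.map_top]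
        exact hf.2
    have h0 := hperp N hN (f.comp A.mkQ) hcomp
    ext x
    simpa using LinearMap.congr_fun h0 x
  · -- closed under strict extensions
    intro A B C _ _ _ _ _ _ f g hfinj hgsurj hrange hstrict hPA hPC
    have hPA' : MemLeftPerp G X A := hPA
    have hPC' : MemLeftPerp G X C := hPC
    obtain ⟨hGA, hperpA⟩ := hPA'
    obtain ⟨hGC, hperpC⟩ := hPC'
    refine ⟨hG.ext_closed A B C f g hfinj hgsurj hrange hGA hGC, ?_⟩
    intro N hN h hh
    -- Step 1: h ∘ f is a strict morphism, hence zero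
    have hkerf : IsStrictSub G (LinearMap.ker f) := by
      rw [LinearMap.ker_eq_bot.mpr hfinj]
      exact strict_bot hG
    have hcomp1 : IsStrictMorphism G (h.comp f) := by
      constructor
      · rw [LinearMap.ker_comp]
        exact strict_comap hG f hkerf hstrict.1 hh.1
      · rw [LinearMap.range_comp]
        exact strict_map hG h hh.1.1 (fun B' hB' => hh.2.2 B' hB') hstrict
    have h10 : h.comp f = 0 := hperpA N hN (h.comp f) hcomp1
    have hle : LinearMap.ker g ≤ LinearMap.ker h := by
      rw [← hrange]
      rintro _ ⟨a, rfl⟩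
      simpa [LinearMap.mem_ker] using LinearMap.congr_fun h10 a
    -- Step 2: factor h through g
    obtain ⟨h', hfact⟩ : ∃ h' : C →ₗ[R] ↥N, ∀ b : B, h' (g b) = h b := by
      refine ⟨((LinearMap.ker g).liftQ h hle).comp
        ((g.quotKerEquivOfSurjective hgsurj).symm : C →ₗ[R] B ⧸ LinearMap.ker g), ?_⟩
      intro b
      set e := g.quotKerEquivOfSurjective hgsurj with hedef
      have he : e ((LinearMap.ker g).mkQ b) = g b := by
        simp [hedef, LinearMap.quotKerEquivOfSurjective, Submodule.mkQ_apply]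
      have hsymm : e.symm (g b) = (LinearMap.ker g).mkQ b := by
        rw [← he, LinearEquiv.symm_apply_apply]
      simp only [LinearMap.comp_apply, LinearEquiv.coe_coe, hsymm, Submodule.mkQ_apply,
        Submodule.liftQ_apply]
    have hcg : h'.comp g = h := by
      ext b
      exact hfact b
    -- Step 3: h' is a strict morphism, hence zero
    have hrgh' : LinearMap.range h' = LinearMap.range h := by
      conv_rhs => rw [← hcg]
      rw [LinearMap.range_comp, LinearMap.range_eq_top.mpr hgsurj, Submodule.map_top]
    have hkh' : LinearMap.ker h' = Submodule.map g (LinearMap.ker h) := by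
      ext c
      constructor
      · intro hc
        obtain ⟨b, rfl⟩ := hgsurj c
        refine ⟨b, ?_, rfl⟩
        have hc' : h' (g b) = 0 := hc
        show h b = 0
        rw [← hfact b]
        exact hc'
      · rintro ⟨b, hb, rfl⟩
        have hb' : h b = 0 := hb
        exact (hfact b).trans hb'
    have hstrh' : IsStrictMorphism G h' := by
      constructor
      · rw [hkh']
        refine strict_map hG g (memG_ofEq hG hrange hstrict.1) ?_ hh.1
        intro B' hB'
        refine memG_ofEq hG ?_ hB'
        rw [LinearMap.range_eq_top.mpr hgsurj, top_inf_eq]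
      · rw [hrgh']
        exact hh.2
    have h'0 : h' = 0 := hperpC N hN h' hstrh'
    ext b
    rw [← hfact b, h'0]
    simp


end PaperTC
end

section
/- Let 𝒢 be a torsion class in mod-Λ and 𝒫 ⊆ 𝒢 a pseudo-torsion class. Then ⟂(𝒫⟂) = 𝒫, where perpendiculars are taken with respect to strict morphisms. Hence taking perpendicular classes gives a bijection between pseudo-torsion classes and pseudo-torsionfree classes in 𝒢. -/
/-!
Common framework: a torsion class `𝒢` in `mod-Λ` is modelled as a predicate
`G : ModuleCat R → Prop` (closed under isomorphism, quotients and extensions).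
Strict subobjects, fibrations, cofibrations, strict morphisms, pseudo-torsion
classes etc. follow the definitions of the paper.
-/

namespace PaperTC

variable {R : Type} [Ring R]

section Helpers

variable {G P : ModuleCat.{0} R → Prop}

lemma strictSub_top (hG : IsTorsionClass G) {M : Type} [AddCommGroup M] [Module R M]
    (hM : Mem G M) : IsStrictSub G (⊤ : Submodule R M) := by
  refine ⟨hG.iso_closed M _ Submodule.topEquiv.symm hM, ?_⟩
  intro B' hB'
  rw [top_inf_eq]
  exact hB'

lemma strictSub_bot (hG : IsTorsionClass G) {M : Type} [AddCommGroup M] [Module R M] :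
    IsStrictSub G (⊥ : Submodule R M) := by
  refine ⟨hG.zero_mem _ inferInstance, ?_⟩
  intro B' hB'
  rw [bot_inf_eq]
  exact hG.zero_mem _ inferInstance

lemma memP_iso (hG : IsTorsionClass G) (hP : IsPseudoTorsionClass G P)
    {M N : Type} [AddCommGroup M] [Module R M] [AddCommGroup N] [Module R N]
    (e : M ≃ₗ[R] N) (h : Mem P M) : Mem P N := by
  have hGN : Mem G N := hG.iso_closed M N e (hP.subset _ h)
  refine hP.ext_closed M N PUnit e.toLinearMap 0 e.injective
    (fun x => ⟨0, Subsingleton.elim _ _⟩) ?_ ?_ h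
    (hP.zero_mem PUnit inferInstance (hG.zero_mem PUnit inferInstance))
  · rw [LinearEquiv.range, LinearMap.ker_zero]
  · rw [LinearEquiv.range]
    exact strictSub_top hG hGN

/-- If `A` is strict in `M` and the "restriction" `comap W.subtype A` lies in `G`,
then it is strict in `W`. -/
lemma strictSub_comap (hG : IsTorsionClass G) {M : Type} [AddCommGroup M] [Module R M]
    {A : Submodule R M} (hA : IsStrictSub G A) (W : Submodule R M)
    (hAW : Mem G ↥(Submodule.comap W.subtype A)) :
    IsStrictSub G (Submodule.comap W.subtype A) := by
  refine ⟨hAW, ?_⟩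
  intro B'' hB''
  have hinj := W.injective_subtype
  have hmap : Mem G ↥(Submodule.map W.subtype B'') :=
    hG.iso_closed _ _ (Submodule.equivMapOfInjective W.subtype hinj B'') hB''
  have h2 : Mem G ↥(A ⊓ Submodule.map W.subtype B'') := hA.2 _ hmap
  have hle : Submodule.map W.subtype B'' ≤ W := Submodule.map_subtype_le W B''
  have key : Submodule.map W.subtype (Submodule.comap W.subtype A ⊓ B'')
      = A ⊓ Submodule.map W.subtype B'' := by
    rw [Submodule.map_inf W.subtype hinj, Submodule.map_comap_subtype, inf_comm W A,
      inf_assoc, show W ⊓ Submodule.map W.subtype B'' = Submodule.map W.subtype B''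
        from inf_eq_right.mpr hle]
  rw [← key] at h2
  exact hG.iso_closed _ _
    (Submodule.equivMapOfInjective W.subtype hinj (Submodule.comap W.subtype A ⊓ B'')).symm h2

/-- Strict extension principle for `W ≤ M` over a strict submodule `A ≤ M`:
if the part of `A` inside `W` and the image of `W` in `M⧸A` lie in `Φ`, so does `W`. -/
lemma mem_of_ses_quot (hG : IsTorsionClass G) (Φ : ModuleCat.{0} R → Prop)
    (hext : ∀ (A B C : Type) [AddCommGroup A] [Module R A] [AddCommGroup B] [Module R B]
      [AddCommGroup C] [Module R C] (f : A →ₗ[R] B) (g : B →ₗ[R] C),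
      Function.Injective f → Function.Surjective g →
      LinearMap.range f = LinearMap.ker g → IsStrictSub G (LinearMap.range f) →
      Mem Φ A → Mem Φ C → Mem Φ B)
    {M : Type} [AddCommGroup M] [Module R M]
    (A W : Submodule R M) (hA : IsStrictSub G A)
    (hAWG : Mem G ↥(Submodule.comap W.subtype A))
    (h1 : Mem Φ ↥(Submodule.comap W.subtype A))
    (h2 : Mem Φ ↥(Submodule.map A.mkQ W)) : Mem Φ ↥W := by
  set A' := Submodule.comap W.subtype A with hA'
  set D := Submodule.map A.mkQ W with hD
  have hsub : ∀ w : ↥W, (A.mkQ ∘ₗ W.subtype) w ∈ D := fun w => Submodule.mem_map_of_mem w.2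
  set g : ↥W →ₗ[R] ↥D := LinearMap.codRestrict D (A.mkQ ∘ₗ W.subtype) hsub with hg
  have hsurj : Function.Surjective g := by
    rintro ⟨y, hy⟩
    obtain ⟨w, hw, rfl⟩ := Submodule.mem_map.mp hy
    exact ⟨⟨w, hw⟩, rfl⟩
  have hexact : LinearMap.range A'.subtype = LinearMap.ker g := by
    rw [Submodule.range_subtype, hg, LinearMap.ker_codRestrict, LinearMap.ker_comp,
      Submodule.ker_mkQ]
  have hstrict : IsStrictSub G (LinearMap.range A'.subtype) := by
    rw [Submodule.range_subtype]
    exact strictSub_comap hG hA W hAWG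
  exact hext ↥A' ↥W ↥D A'.subtype g A'.injective_subtype hsurj hexact hstrict h1 h2

end Helpers

theorem statement_8 (k : Type) [Field k] [Algebra k R] [FiniteDimensional k R]
    (G : ModuleCat.{0} R → Prop) (hG : IsTorsionClass G)
    (hfin : ∀ M : ModuleCat.{0} R, G M → Module.Finite R ↥M)
    (P : ModuleCat.{0} R → Prop) (hP : IsPseudoTorsionClass G P) :
    ∀ M : ModuleCat.{0} R,
      (MemLeftPerp G (fun N : ModuleCat.{0} R => MemRightPerp G P ↥N) ↥M ↔ P M) := by
  intro M
  constructor
  · intro hM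
    have hGM : Mem G ↥M := hM.1
    have hnR : IsNoetherianRing R := isNoetherian_of_tower k inferInstance
    have hfM : Module.Finite R ↥M := hfin M hM.1
    have hnoeth : IsNoetherian R ↥M := inferInstance
    set S : Set (Submodule R ↥M) := {A | IsStrictSub G A ∧ Mem P ↥A} with hS
    have hbot : (⊥ : Submodule R ↥M) ∈ S :=
      ⟨strictSub_bot hG, hP.zero_mem _ inferInstance (hG.zero_mem _ inferInstance)⟩
    obtain ⟨A, hAS, hAmax⟩ := (set_has_maximal_iff_noetherian.mpr hnoeth) S ⟨⊥, hbot⟩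
    have hquotG : Mem G (↥M ⧸ A) := hG.quot_closed ↥M A hGM
    -- M/A lies in the right perpendicular of P
    have hperp : MemRightPerp G P (↥M ⧸ A) := by
      refine ⟨hquotG, ?_⟩
      intro X hX f hf
      set Rf := LinearMap.range f with hRfdef
      set B := Submodule.comap A.mkQ Rf with hBdef
      have hAB : A ≤ B := by
        intro x hx
        have h0 : A.mkQ x = 0 := (Submodule.Quotient.mk_eq_zero A).mpr hx
        exact Submodule.mem_comap.mpr (by rw [h0]; exact Rf.zero_mem)
      -- range f lies in P
      have hRfP : Mem P ↥Rf :=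
        memP_iso hG hP f.quotKerEquivRange (hP.quot_closed ↥X (LinearMap.ker f) hf.1 hX)
      -- B lies in P
      have hBA'G : Mem G ↥(Submodule.comap B.subtype A) :=
        hG.iso_closed _ _ (Submodule.comapSubtypeEquivOfLe hAB).symm hAS.1.1
      have hBA'P : Mem P ↥(Submodule.comap B.subtype A) :=
        memP_iso hG hP (Submodule.comapSubtypeEquivOfLe hAB).symm hAS.2
      have hmapB : Submodule.map A.mkQ B = Rf :=
        Submodule.map_comap_eq_of_surjective A.mkQ_surjective Rf
      have hBP : Mem P ↥B :=
        mem_of_ses_quot hG P hP.ext_closed A B hAS.1 hBA'G hBA'P (by rw [hmapB]; exact hRfP)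
      -- B is a strict subobject of M
      have hBstrict : IsStrictSub G B := by
        refine ⟨hP.subset _ hBP, ?_⟩
        intro B' hB'
        -- the part of A inside B ⊓ B'
        have hABB' : A ⊓ B' ≤ B ⊓ B' := inf_le_inf_right B' hAB
        have heq : Submodule.comap (B ⊓ B').subtype A
            = Submodule.comap (B ⊓ B').subtype (A ⊓ B') := by
          ext x
          simp only [Submodule.mem_comap, Submodule.mem_inf]
          exact ⟨fun h => ⟨h, (Submodule.mem_inf.mp x.2).2⟩, fun h => h.1⟩
        have hG1 : Mem G ↥(Submodule.comap (B ⊓ B').subtype A) := by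
          rw [heq]
          exact hG.iso_closed _ _ (Submodule.comapSubtypeEquivOfLe hABB').symm
            (hAS.1.2 B' hB')
        -- the image of B ⊓ B' in M/A
        have hmapeq : Submodule.map A.mkQ (B ⊓ B') = Rf ⊓ Submodule.map A.mkQ B' := by
          apply le_antisymm
          · exact le_inf (le_trans (Submodule.map_mono inf_le_left) (le_of_eq hmapB))
              (Submodule.map_mono inf_le_right)
          · intro y hy
            obtain ⟨hy1, hy2⟩ := Submodule.mem_inf.mp hy
            obtain ⟨b, hb, rfl⟩ := Submodule.mem_map.mp hy2
            exact Submodule.mem_map_of_mem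
              (Submodule.mem_inf.mpr ⟨Submodule.mem_comap.mpr hy1, hb⟩)
        have hmapB'G : Mem G ↥(Submodule.map A.mkQ B') := by
          have hrg : Submodule.map A.mkQ B' = LinearMap.range (A.mkQ ∘ₗ B'.subtype) := by
            rw [LinearMap.range_comp, Submodule.range_subtype]
          rw [hrg]
          exact hG.iso_closed _ _ (A.mkQ ∘ₗ B'.subtype).quotKerEquivRange
            (hG.quot_closed ↥B' _ hB')
        have hG2 : Mem G ↥(Submodule.map A.mkQ (B ⊓ B')) := by
          rw [hmapeq]
          exact hf.2.2 _ hmapB'G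
        exact mem_of_ses_quot hG G
          (fun A₀ B₀ C₀ _ _ _ _ _ _ f₀ g₀ hi hs he _ h1 h2 =>
            hG.ext_closed A₀ B₀ C₀ f₀ g₀ hi hs he h1 h2)
          A (B ⊓ B') hAS.1 hG1 hG1 hG2
      -- maximality forces B = A, hence f = 0
      have hBS : B ∈ S := ⟨hBstrict, hBP⟩
      have hAeqB : A = B := by
        rcases lt_or_eq_of_le hAB with h | h
        · exact absurd h (hAmax B hBS)
        · exact h
      have hRfbot : Rf = ⊥ := by
        have h1 : Submodule.map A.mkQ B = Submodule.map A.mkQ A := by rw [← hAeqB]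
        rw [hmapB, Submodule.mkQ_map_self] at h1
        exact h1
      exact LinearMap.range_eq_bot.mp hRfbot
    -- the quotient map M → M/A is strict, hence zero, hence A = ⊤
    have hstrictm : IsStrictMorphism G A.mkQ := by
      constructor
      · rw [Submodule.ker_mkQ]
        exact hAS.1
      · rw [Submodule.range_mkQ]
        exact strictSub_top hG hquotG
    have h0 : A.mkQ = 0 := hM.2 (ModuleCat.of R (↥M ⧸ A)) hperp A.mkQ hstrictm
    have hAtop : A = ⊤ := by
      rw [← Submodule.ker_mkQ A, h0, LinearMap.ker_zero]
    have : Mem P ↥(⊤ : Submodule R ↥M) := hAtop ▸ hAS.2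
    exact memP_iso hG hP Submodule.topEquiv this
  · intro hPM
    exact ⟨hP.subset M hPM, fun N hN f hf => hN.2 M hPM f hf⟩


end PaperTC
end
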